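/- Expected value of multilinear extension with dependent-but-dominated marginals (Lemma 3.7 of Calinescu et al., restricted form): let h : 2^N → ℝ≥0 be monotone submodular, and partition N into groups N = ⊎_{i} N_i. Let R be a random set containing at most one element from each group N_i, where within each group element e is chosen with probability x_e (so Σ_{e ∈ N_i} x_e ≤ 1), independently across groups. Then E[h(R)] ≥ H(x), where H is the multilinear extension of h. -/

import Mathlib

/-!
Both random sets are products over the groups: write them as families `t : ι → Finset N`, where
`t i` is the part in group `i`. Now swap the within-group law one group at a time, from
independent inclusion to the choice of at most one element (a hybrid argument). With the other
groups fixed, contributing a set `V`, submodularity bounds the independent law of group `G` by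
`h V + ∑ e ∈ G, x e * (h (insert e V) - h V)`, since adding further elements only lowers the
marginal value of `e`; and this is exactly the expectation under the one-element choice.
So no swap lowers the expectation, and we pass from `H(x)` to `E[h(R)]`.
-/

open Finset

/-- The multilinear extension of a set function `h` on a finite ground set. -/
noncomputable def mlExt {N : Type*} [Fintype N] [DecidableEq N]
    (h : Finset N → ℝ) (x : N → ℝ) : ℝ :=
  ∑ U ∈ (Finset.univ : Finset N).powerset,
    (∏ e ∈ U, x e) * (∏ e ∈ Finset.univ \ U, (1 - x e)) * h U

open Function

section Hybrid

variable {ι α R : Type*} [DecidableEq ι]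

theorem update_funSplitAt_symm (i : ι) (t : {j // j ≠ i} → α) (a b : α) :
    update ((Equiv.funSplitAt i α).symm (a, t)) i b = (Equiv.funSplitAt i α).symm (b, t) := by
  funext j
  by_cases hj : j = i
  · subst hj; simp
  · simp [hj]

variable [Fintype ι] [Fintype α] [CommSemiring R]

theorem sum_prod_mul_eq_sum_funSplitAt (r : ι → α → R) (g : (ι → α) → R) (i : ι) :
    ∑ t, (∏ j, r j (t j)) * g t =
      ∑ u : {j // j ≠ i} → α, (∏ j : {j // j ≠ i}, r j (u j)) *
        ∑ a, r i a * g ((Equiv.funSplitAt i α).symm (a, u)) := by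
  rw [← (Equiv.funSplitAt i α).symm.sum_comp, Fintype.sum_prod_type, sum_comm]
  refine sum_congr rfl fun u _ => ?_
  rw [mul_sum]
  refine sum_congr rfl fun a _ => ?_
  rw [Fintype.prod_eq_mul_prod_subtype_ne _ i]
  simp only [Equiv.funSplitAt_symm_apply, dite_true]
  have hu : ∀ j : {j // j ≠ i}, (if h : (j : ι) = i then a else u ⟨j, h⟩) = u j :=
    fun j => dif_neg j.2
  simp only [hu]
  ring

variable [PartialOrder R] [IsOrderedRing R]

theorem sum_prod_mul_le_sum_prod_update_mul (r : ι → α → R) (g : (ι → α) → R) (i : ι)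
    (q : α → R) (hr : ∀ j ≠ i, ∀ a, 0 ≤ r j a)
    (hstep : ∀ t, ∑ a, r i a * g (update t i a) ≤ ∑ a, q a * g (update t i a)) :
    ∑ t, (∏ j, r j (t j)) * g t ≤ ∑ t, (∏ j, update r i q j (t j)) * g t := by
  rw [sum_prod_mul_eq_sum_funSplitAt r g i, sum_prod_mul_eq_sum_funSplitAt _ g i]
  simp only [update_self]
  refine sum_le_sum fun u _ => ?_
  rw [show ∏ j : {j // j ≠ i}, update r i q j (u j) = ∏ j : {j // j ≠ i}, r j (u j) from
    prod_congr rfl fun j _ => by rw [update_of_ne j.2]]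
  refine mul_le_mul_of_nonneg_left ?_ (prod_nonneg fun j _ => hr j j.2 _)
  rcases isEmpty_or_nonempty α with hα | ⟨⟨a₀⟩⟩
  · simp
  · simpa only [update_funSplitAt_symm] using hstep ((Equiv.funSplitAt i α).symm (a₀, u))

theorem sum_prod_mul_le_of_forall_update (p q : ι → α → R) (g : (ι → α) → R)
    (hp : ∀ i a, 0 ≤ p i a) (hq : ∀ i a, 0 ≤ q i a)
    (hstep : ∀ i t, ∑ a, p i a * g (update t i a) ≤ ∑ a, q i a * g (update t i a)) :
    ∑ t, (∏ i, p i (t i)) * g t ≤ ∑ t, (∏ i, q i (t i)) * g t := by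
  suffices ∀ s : Finset ι,
      ∑ t, (∏ i, p i (t i)) * g t ≤ ∑ t, (∏ i, s.piecewise q p i (t i)) * g t by
    simpa using this univ
  intro s
  induction s using Finset.induction_on with
  | empty => simp
  | insert i s hi ih =>
    refine ih.trans ?_
    rw [piecewise_insert]
    refine sum_prod_mul_le_sum_prod_update_mul _ g i (q i) (fun j _ a => ?_) fun t => ?_
    · by_cases hj : j ∈ s <;> simp [piecewise, hj, hp, hq]
    · simpa [piecewise_eq_of_notMem _ _ _ hi] using hstep i t

end Hybrid

theorem sum_prod_mul_comp {ι β α R : Type*} [Fintype ι] [DecidableEq ι] [Fintype β]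
    [Fintype α] [DecidableEq α] [CommSemiring R] (f : β → α) (φ : ι → β → R) (F : (ι → α) → R) :
    ∑ σ : ι → β, (∏ i, φ i (σ i)) * F (f ∘ σ) =
      ∑ t : ι → α, (∏ i, ∑ b with f b = t i, φ i b) * F t := by
  have hfiber : ∀ t : ι → α,
      Fintype.piFinset (fun i => ({b | f b = t i} : Finset β)) =
        ({σ | f ∘ σ = t} : Finset (ι → β)) := by
    intro t; ext σ; simp [funext_iff]
  simp_rw [Finset.prod_univ_sum, hfiber, sum_mul]
  rw [← sum_fiberwise univ (f ∘ ·)]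
  refine sum_congr rfl fun t _ => sum_congr rfl fun σ hσ => ?_
  rw [(mem_filter.1 hσ).2]

section Submodular

variable {N : Type*} [DecidableEq N] {h : Finset N → ℝ}

theorem insert_sub_le_of_submodular (hmono : ∀ U V : Finset N, U ⊆ V → h U ≤ h V)
    (hsub : ∀ U V : Finset N, h U + h V ≥ h (U ∪ V) + h (U ∩ V)) (e a : N) (V : Finset N) :
    h (insert e (insert a V)) - h (insert a V) ≤ h (insert e V) - h V := by
  have hunion : insert e V ∪ insert a V = insert e (insert a V) := by
    rw [insert_union, union_insert, union_self]
  have hinter : h V ≤ h (insert e V ∩ insert a V) :=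
    hmono _ _ (subset_inter (subset_insert _ _) (subset_insert _ _))
  have hsub' := hsub (insert e V) (insert a V)
  rw [hunion] at hsub'
  linarith

theorem sum_powerset_prod_mul_le (hmono : ∀ U V : Finset N, U ⊆ V → h U ≤ h V)
    (hsub : ∀ U V : Finset N, h U + h V ≥ h (U ∪ V) + h (U ∩ V))
    (x : N → ℝ) (hx : ∀ e, 0 ≤ x e ∧ x e ≤ 1) (G V : Finset N) :
    ∑ T ∈ G.powerset, ((∏ e ∈ T, x e) * ∏ e ∈ G \ T, (1 - x e)) * h (T ∪ V) ≤
      h V + ∑ e ∈ G, x e * (h (insert e V) - h V) := by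
  induction G using Finset.induction_on generalizing V with
  | empty => simp
  | insert a G ha ih =>
    have hmarginal : ∑ e ∈ G, x e * (h (insert e (insert a V)) - h (insert a V)) ≤
        ∑ e ∈ G, x e * (h (insert e V) - h V) := sum_le_sum fun e _ =>
      mul_le_mul_of_nonneg_left (insert_sub_le_of_submodular hmono hsub e a V) (hx e).1
    have hsplit : ∑ T ∈ (insert a G).powerset,
        ((∏ e ∈ T, x e) * ∏ e ∈ insert a G \ T, (1 - x e)) * h (T ∪ V) =
        (1 - x a) * ∑ T ∈ G.powerset, ((∏ e ∈ T, x e) * ∏ e ∈ G \ T, (1 - x e)) * h (T ∪ V) +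
        x a * ∑ T ∈ G.powerset,
          ((∏ e ∈ T, x e) * ∏ e ∈ G \ T, (1 - x e)) * h (T ∪ insert a V) := by
      rw [sum_powerset_insert ha, mul_sum, mul_sum]
      congr 1 <;> refine sum_congr rfl fun T hT => ?_
      · have haT : a ∉ T := fun haT => ha (mem_powerset.1 hT haT)
        rw [insert_sdiff_of_notMem _ haT, prod_insert (by simp [ha])]
        ring
      · have haT : a ∉ T := fun haT => ha (mem_powerset.1 hT haT)
        rw [insert_sdiff_insert, sdiff_insert_of_notMem ha, prod_insert haT,
          insert_union, ← union_insert]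
        ring
    rw [hsplit, sum_insert ha]
    linarith [mul_le_mul_of_nonneg_left (ih V) (sub_nonneg.2 (hx a).2),
      mul_le_mul_of_nonneg_left ((ih (insert a V)).trans (add_le_add_right hmarginal _)) (hx a).1]

end Submodular

section Weights

variable {N : Type*} [DecidableEq N]

def independentWeight (G : Finset N) (x : N → ℝ) (T : Finset N) : ℝ :=
  if T ⊆ G then (∏ e ∈ T, x e) * ∏ e ∈ G \ T, (1 - x e) else 0

def choiceWeight (G : Finset N) (x : N → ℝ) (o : Option N) : ℝ :=
  o.elim (1 - ∑ e ∈ G, x e) fun e => if e ∈ G then x e else 0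

theorem independentWeight_nonneg {x : N → ℝ} (hx : ∀ e, 0 ≤ x e ∧ x e ≤ 1) (G T : Finset N) :
    0 ≤ independentWeight G x T := by
  unfold independentWeight
  split_ifs
  · exact mul_nonneg (prod_nonneg fun e _ => (hx e).1)
      (prod_nonneg fun e _ => sub_nonneg.2 (hx e).2)
  · exact le_rfl

theorem choiceWeight_nonneg {G : Finset N} {x : N → ℝ} (hx : ∀ e, 0 ≤ x e)
    (hG : ∑ e ∈ G, x e ≤ 1) (o : Option N) : 0 ≤ choiceWeight G x o := by
  cases o with
  | none => exact sub_nonneg.2 hG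
  | some e => exact ite_nonneg (hx e) le_rfl

variable [Fintype N]

theorem sum_independentWeight_mul (G : Finset N) (x : N → ℝ) (F : Finset N → ℝ) :
    ∑ T, independentWeight G x T * F T =
      ∑ T ∈ G.powerset, ((∏ e ∈ T, x e) * ∏ e ∈ G \ T, (1 - x e)) * F T := by
  simp only [independentWeight, ite_mul, zero_mul]
  rw [sum_ite, sum_const_zero, add_zero]
  congr 1
  ext T; simp

theorem sum_pushforward_choiceWeight_mul (G : Finset N) (x : N → ℝ) (F : Finset N → ℝ) :
    ∑ T, (∑ o with o.toFinset = T, choiceWeight G x o) * F T =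
      (1 - ∑ e ∈ G, x e) * F ∅ + ∑ e ∈ G, x e * F {e} := by
  calc _ = ∑ T, ∑ o with o.toFinset = T, choiceWeight G x o * F o.toFinset := by
        refine sum_congr rfl fun T _ => ?_
        rw [sum_mul]
        exact sum_congr rfl fun o ho => by rw [(mem_filter.1 ho).2]
    _ = ∑ o, choiceWeight G x o * F o.toFinset := sum_fiberwise _ _ _
    _ = _ := by simp [choiceWeight, ite_mul, sum_ite_mem]

theorem sum_independentWeight_mul_le_choiceWeight {h : Finset N → ℝ}
    (hmono : ∀ U V : Finset N, U ⊆ V → h U ≤ h V)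
    (hsub : ∀ U V : Finset N, h U + h V ≥ h (U ∪ V) + h (U ∩ V))
    {x : N → ℝ} (hx : ∀ e, 0 ≤ x e ∧ x e ≤ 1) (G V : Finset N) :
    ∑ T, independentWeight G x T * h (T ∪ V) ≤
      ∑ T, (∑ o with o.toFinset = T, choiceWeight G x o) * h (T ∪ V) := by
  rw [sum_independentWeight_mul, sum_pushforward_choiceWeight_mul]
  refine (sum_powerset_prod_mul_le hmono hsub x hx G V).trans_eq ?_
  simp only [empty_union, ← insert_eq, mul_sub, sum_sub_distrib, ← sum_mul]
  ring

end Weights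

section Partition

variable {N ι : Type*} [DecidableEq N] [Fintype ι]

theorem biUnion_update [DecidableEq ι] (t : ι → Finset N) (i : ι) (T : Finset N) :
    univ.biUnion (update t i T) = T ∪ (univ.erase i).biUnion t := by
  ext e
  simp only [mem_biUnion, mem_univ, true_and, mem_union, mem_erase, and_true]
  constructor
  · rintro ⟨j, hj⟩
    by_cases hji : j = i
    · subst hji; exact .inl (by simpa using hj)
    · exact .inr ⟨j, hji, by simpa [hji] using hj⟩
  · rintro (he | ⟨j, hji, hj⟩)
    · exact ⟨i, by simpa using he⟩
    · exact ⟨j, by simpa [hji] using hj⟩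

variable {Ng : ι → Finset N}

theorem biUnion_inter_of_cover (hcover : ∀ e, ∃ i, e ∈ Ng i) (U : Finset N) :
    univ.biUnion (fun i => U ∩ Ng i) = U := by
  ext e
  simp only [mem_biUnion, mem_univ, true_and, mem_inter]
  exact ⟨fun ⟨_, he, _⟩ => he, fun he => (hcover e).imp fun _ hi => ⟨he, hi⟩⟩

theorem biUnion_inter_of_disjoint (hdisj : Pairwise (Disjoint on Ng)) {t : ι → Finset N}
    (ht : ∀ i, t i ⊆ Ng i) (i : ι) : univ.biUnion t ∩ Ng i = t i := by
  ext e
  simp only [mem_inter, mem_biUnion, mem_univ, true_and]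
  refine ⟨fun ⟨⟨j, hj⟩, hi⟩ => ?_, fun he => ⟨⟨i, he⟩, ht i he⟩⟩
  obtain rfl : j = i := by_contra fun hji => disjoint_left.1 (hdisj hji) (ht j hj) hi
  exact hj

theorem prod_eq_prod_prod_inter {M : Type*} [CommMonoid M] (hdisj : Pairwise (Disjoint on Ng))
    (hcover : ∀ e, ∃ i, e ∈ Ng i) (f : N → M) (U : Finset N) :
    ∏ e ∈ U, f e = ∏ i, ∏ e ∈ U ∩ Ng i, f e := by
  conv_lhs => rw [← biUnion_inter_of_cover hcover U]
  exact prod_biUnion fun i _ j _ hij =>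
    (hdisj hij).mono inter_subset_right inter_subset_right

variable [Fintype N] [DecidableEq ι]

theorem mlExt_eq_sum_prod_independentWeight (hdisj : Pairwise (Disjoint on Ng))
    (hcover : ∀ e, ∃ i, e ∈ Ng i) (h : Finset N → ℝ) (x : N → ℝ) :
    mlExt h x =
      ∑ t : ι → Finset N, (∏ i, independentWeight (Ng i) x (t i)) * h (univ.biUnion t) := by
  rw [mlExt, powerset_univ]
  refine Fintype.sum_of_injective (fun U i => U ∩ Ng i) (fun U U' hUU' => ?_) _ _ ?_ fun U => ?_
  · rw [← biUnion_inter_of_cover hcover U, ← biUnion_inter_of_cover hcover U']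
    exact congrArg _ hUU'
  · intro t ht
    obtain ⟨i, hi⟩ : ∃ i, ¬ t i ⊆ Ng i := by
      by_contra! hsub
      exact ht ⟨_, funext (biUnion_inter_of_disjoint hdisj hsub)⟩
    rw [prod_eq_zero (mem_univ i) (if_neg hi), zero_mul]
  · have hcompl : ∀ i, Ng i \ (U ∩ Ng i) = (univ \ U) ∩ Ng i := fun i => by
      rw [sdiff_inter_self_right, sdiff_eq_inter_compl, compl_eq_univ_sdiff, inter_comm]
    simp only [independentWeight, inter_subset_right, if_true, hcompl, prod_mul_distrib,
      biUnion_inter_of_cover hcover, ← prod_eq_prod_prod_inter hdisj hcover]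

end Partition

open Classical in
theorem stmt19 {N ι : Type*} [Fintype N] [DecidableEq N] [Fintype ι] [DecidableEq ι]
    (Ng : ι → Finset N)
    (hdisj : ∀ i j, i ≠ j → Disjoint (Ng i) (Ng j))
    (hcover : ∀ e : N, ∃ i, e ∈ Ng i)
    (h : Finset N → ℝ)
    (hmono : ∀ U V : Finset N, U ⊆ V → h U ≤ h V)
    (hsub : ∀ U V : Finset N, h U + h V ≥ h (U ∪ V) + h (U ∩ V))
    (x : N → ℝ) (hx : ∀ e, 0 ≤ x e ∧ x e ≤ 1)
    (hgroup : ∀ i, ∑ e ∈ Ng i, x e ≤ 1)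
    -- `w σ` is the probability that the independent-across-groups choices are `σ`,
    -- where within group `i` element `e ∈ Ng i` is chosen with probability `x e`.
    (w : (ι → Option N) → ℝ)
    (hw : ∀ σ, w σ = ∏ i, (match σ i with
      | some e => if e ∈ Ng i then x e else 0
      | none => 1 - ∑ e ∈ Ng i, x e))
    (R : (ι → Option N) → Finset N)
    (hR : ∀ σ, R σ = Finset.univ.filter (fun e => ∃ i, σ i = some e)) :
    ∑ σ : ι → Option N, w σ * h (R σ) ≥ mlExt h x := by
  have hw' : ∀ σ, w σ = ∏ i, choiceWeight (Ng i) x (σ i) := fun σ => by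
    rw [hw σ]
    exact prod_congr rfl fun i _ => by cases σ i <;> rfl
  have hR' : ∀ σ, R σ = univ.biUnion fun i => (σ i).toFinset := fun σ => by
    rw [hR σ]
    ext e
    simp
  have hchoice : ∑ σ, w σ * h (R σ) = ∑ t : ι → Finset N,
      (∏ i, ∑ o with o.toFinset = t i, choiceWeight (Ng i) x o) * h (univ.biUnion t) := by
    simp only [hw', hR']
    exact sum_prod_mul_comp Option.toFinset _ fun t => h (univ.biUnion t)
  rw [ge_iff_le, hchoice, mlExt_eq_sum_prod_independentWeight hdisj hcover]
  exact (sum_prod_mul_le_of_forall_update (fun i => independentWeight (Ng i) x)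
    (fun i T => ∑ o with o.toFinset = T, choiceWeight (Ng i) x o) (fun t => h (univ.biUnion t))
    (fun i => independentWeight_nonneg hx _)
    (fun i T => sum_nonneg fun o _ => choiceWeight_nonneg (fun e => (hx e).1) (hgroup i) o)
    fun i t => by
      simpa only [biUnion_update] using
        sum_independentWeight_mul_le_choiceWeight hmono hsub hx (Ng i) _ :)
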